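/- There is a constant c > 0 such that for every real number x' with |x'| ≤ 2ρ one has ∫_{1/b}^∞ V'(r) / ( V'(r)² + (U'(r) - x')² ) dr ≤ c. In particular, since |x'|^{-1+1/γ} ≥ (2ρ)^{-1+1/γ} for 0 < |x'| ≤ 2ρ, this integral is bounded by a constant times |x'|^{-1+1/γ} for all 0 < |x'| ≤ 2ρ. -/

import Mathlib

/-!
For `r > 0` the point `ζ* + r` lies on the horizontal line through `ζ*`, to its right, so
`0 < arg (ζ* + r) < θ₀`; multiplying by `γ = π / θ₀` gives `V' r = Im ((ζ* + r)^γ) > 0`.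
The integrand is the Poisson kernel of the upper half-plane evaluated at `W = (ζ* + r)^γ`.
On a bounded range `(1/b, R]` it is at most `1 / V' r`, which is bounded by compactness.
For `r > R` we have `|W| = |ζ* + r|^γ ≥ (r/2)^γ ≥ 2|x'|`, so `|W - x'| ≥ |W|/2` and the integrand
is at most `4/|W| ≤ 4 · 2^γ r^(-γ)`, which is integrable at infinity because `γ > 1`.
The second bound follows since `|x'|^(-1+1/γ) ≥ (2ρ)^(-1+1/γ)`.
-/

open Complex MeasureTheory Set

lemma cos_arg_eq_sin_arctan {z : ℂ} (hz : 0 < z.im) :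
    Real.cos (arg z) = Real.sin (Real.arctan (z.re / z.im)) := by
  have hz0 : z ≠ 0 := fun h => by simp [h] at hz
  rw [cos_arg hz0, Real.sin_arctan, norm_def, normSq_apply,
    show 1 + (z.re / z.im) ^ 2 = (z.re * z.re + z.im * z.im) / z.im ^ 2 by field_simp; ring,
    Real.sqrt_div' _ (sq_nonneg _), Real.sqrt_sq hz.le]
  field_simp

lemma arg_lt_arg_of_im_eq {z w : ℂ} (hz : 0 < z.im) (hw : w.im = z.im) (h : z.re < w.re) :
    arg w < arg z := by
  have hcos : Real.cos (arg z) < Real.cos (arg w) := by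
    rw [cos_arg_eq_sin_arctan hz, cos_arg_eq_sin_arctan (hw ▸ hz), hw]
    exact Real.strictMonoOn_sin
      ⟨(Real.neg_pi_div_two_lt_arctan _).le, (Real.arctan_lt_pi_div_two _).le⟩
      ⟨(Real.neg_pi_div_two_lt_arctan _).le, (Real.arctan_lt_pi_div_two _).le⟩
      (Real.arctan_strictMono (div_lt_div_of_pos_right h hz))
  exact (Real.strictAntiOn_cos.lt_iff_gt ⟨arg_nonneg_iff.2 hz.le, arg_le_pi z⟩
    ⟨arg_nonneg_iff.2 (hw ▸ hz.le), arg_le_pi w⟩).1 hcos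

lemma arg_pos_of_im_pos {z : ℂ} (hz : 0 < z.im) : 0 < arg z :=
  (arg_nonneg_iff.2 hz.le).lt_of_ne fun h => hz.ne' (arg_eq_zero_iff.1 h.symm).2

lemma one_lt_of_mul_arg_eq_pi {ζ : ℂ} (hζ : 0 < ζ.im) {γ : ℝ} (hγ : γ * arg ζ = Real.pi) :
    1 < γ := by
  nlinarith [arg_pos_of_im_pos hζ, arg_lt_pi_iff.2 (Or.inr hζ.ne')]

lemma im_cpow_ofReal_pos {z : ℂ} {γ : ℝ} (h0 : 0 < arg z * γ) (hπ : arg z * γ < Real.pi) :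
    0 < (z ^ (γ : ℂ)).im := by
  have hz : z ≠ 0 := by rintro rfl; simp at h0
  rw [cpow_ofReal_im]
  exact mul_pos (Real.rpow_pos_of_pos (norm_pos_iff.2 hz) _) (Real.sin_pos_of_pos_of_lt_pi h0 hπ)

lemma im_cpow_add_ofReal_pos {ζ : ℂ} (hζ : 0 < ζ.im) {γ : ℝ} (hγ : γ * arg ζ = Real.pi)
    {r : ℝ} (hr : 0 < r) : 0 < ((ζ + r) ^ (γ : ℂ)).im := by
  have hw : (ζ + r).im = ζ.im := by simp
  have hγ0 : 0 < γ := one_pos.trans (one_lt_of_mul_arg_eq_pi hζ hγ)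
  refine im_cpow_ofReal_pos (mul_pos (arg_pos_of_im_pos (hw ▸ hζ)) hγ0) ?_
  calc arg (ζ + r) * γ < arg ζ * γ :=
        mul_lt_mul_of_pos_right (arg_lt_arg_of_im_eq hζ hw (by simpa using hr)) hγ0
    _ = Real.pi := by rw [mul_comm, hγ]

lemma continuous_cpow_add_ofReal {ζ : ℂ} (hζ : ζ.im ≠ 0) (γ : ℂ) :
    Continuous fun r : ℝ => (ζ + r) ^ γ :=
  (continuous_const.add continuous_ofReal).cpow continuous_const
    fun _ => mem_slitPlane_iff.2 (Or.inr (by simpa using hζ))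

/-- Without the usual normalising factor `1/π`. -/
noncomputable def halfPlanePoissonKernel (w : ℂ) (x : ℝ) : ℝ :=
  w.im / (w.im ^ 2 + (w.re - x) ^ 2)

lemma halfPlanePoissonKernel_nonneg {w : ℂ} (hw : 0 ≤ w.im) (x : ℝ) :
    0 ≤ halfPlanePoissonKernel w x :=
  div_nonneg hw (by positivity)

lemma halfPlanePoissonKernel_le_inv_im {w : ℂ} (hw : 0 < w.im) (x : ℝ) :
    halfPlanePoissonKernel w x ≤ w.im⁻¹ := by
  rw [halfPlanePoissonKernel, div_le_iff₀ (by positivity)]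
  field_simp
  nlinarith [sq_nonneg (w.re - x)]

lemma halfPlanePoissonKernel_le_four_div_norm (w : ℂ) {x : ℝ} (hx : 2 * |x| ≤ ‖w‖) :
    halfPlanePoissonKernel w x ≤ 4 / ‖w‖ := by
  rcases le_or_gt w.im 0 with him | him
  · exact (div_nonpos_of_nonpos_of_nonneg him (by positivity)).trans (by positivity)
  have hw : 0 < ‖w‖ := (abs_pos_of_pos him).trans_le (abs_im_le_norm w)
  have hdist : ‖w‖ / 2 ≤ ‖w - x‖ := by
    have := norm_sub_norm_le w (x : ℂ)
    rw [norm_real, Real.norm_eq_abs] at this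
    linarith
  have hden : w.im ^ 2 + (w.re - x) ^ 2 = ‖w - x‖ ^ 2 := by
    rw [Complex.sq_norm, normSq_apply]
    simp only [sub_re, sub_im, ofReal_re, ofReal_im]
    ring
  rw [halfPlanePoissonKernel, hden, div_le_div_iff₀ (by nlinarith) hw]
  nlinarith [(le_abs_self w.im).trans (abs_im_le_norm w),
    mul_self_le_mul_self (by positivity) hdist]

lemma halfPlanePoissonKernel_cpow_le {w : ℂ} {γ s x : ℝ} (hγ : 0 ≤ γ) (hs : 0 < s) (hsw : s ≤ ‖w‖)
    (hx : 2 * |x| ≤ s ^ γ) : halfPlanePoissonKernel (w ^ (γ : ℂ)) x ≤ 4 * s ^ (-γ) := by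
  have hnorm : s ^ γ ≤ ‖w ^ (γ : ℂ)‖ := by
    rw [norm_cpow_real]
    exact Real.rpow_le_rpow hs.le hsw hγ
  calc _ ≤ 4 / ‖w ^ (γ : ℂ)‖ := halfPlanePoissonKernel_le_four_div_norm _ (hx.trans hnorm)
    _ ≤ 4 / s ^ γ := div_le_div_of_nonneg_left (by norm_num) (by positivity) hnorm
    _ = 4 * s ^ (-γ) := by rw [Real.rpow_neg hs.le, div_eq_mul_inv]

lemma halfPlanePoissonKernel_cpow_add_ofReal_le {ζ : ℂ} {γ r x : ℝ} (hγ : 0 ≤ γ)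
    (hr : 2 * |ζ.re| < r) (hx : 2 * |x| ≤ (r / 2) ^ γ) :
    halfPlanePoissonKernel ((ζ + r) ^ (γ : ℂ)) x ≤ 4 * 2 ^ γ * r ^ (-γ) := by
  have hr0 : 0 < r := by linarith [abs_nonneg ζ.re]
  have hnorm : r / 2 ≤ ‖ζ + r‖ := by
    refine le_trans ?_ (re_le_norm _)
    simp only [add_re, ofReal_re]
    linarith [neg_abs_le ζ.re]
  calc _ ≤ 4 * (r / 2) ^ (-γ) := halfPlanePoissonKernel_cpow_le hγ (by positivity) hnorm hx
    _ = 4 * 2 ^ γ * r ^ (-γ) := by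
      rw [Real.div_rpow hr0.le zero_le_two, Real.rpow_neg zero_le_two]
      field_simp

lemma exists_pos_forall_setIntegral_Ioi_le {ι : Type*} {f : ι → ℝ → ℝ} {t R C K p : ℝ}
    (hR : 0 < R) (hp : 1 < p) (hf0 : ∀ i, ∀ r ∈ Ioi t, 0 ≤ f i r)
    (hC : ∀ i, ∀ r ∈ Ioc t R, f i r ≤ C) (hK : ∀ i, ∀ r ∈ Ioi R, f i r ≤ K * r ^ (-p)) :
    ∃ c > 0, ∀ i, ∫ r in Ioi t, f i r ≤ c := by
  set g : ℝ → ℝ := (Ioc t R).piecewise (fun _ => C) fun r => K * r ^ (-p)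
  have hg : IntegrableOn g (Ioi t) := by
    refine IntegrableOn.mono_set (IntegrableOn.union ?_ ?_) (Ioi_subset_Ioc_union_Ioi (b := R))
    · exact (integrableOn_const (C := C) measure_Ioc_lt_top.ne).congr_fun
        (fun r hr => by simp [g, piecewise_eq_of_mem _ _ _ hr]) measurableSet_Ioc
    · have : IntegrableOn (fun r => K * r ^ (-p)) (Ioi R) :=
        (integrableOn_Ioi_rpow_of_lt (by linarith) hR).const_mul K
      exact this.congr_fun (fun r (hr : R < r) => by
        simp [g, piecewise_eq_of_notMem _ _ _ fun h : r ∈ Ioc t R => (not_lt.2 h.2) hr])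
        measurableSet_Ioi
  refine ⟨max (∫ r in Ioi t, g r) 1, by positivity, fun i => ?_⟩
  refine (integral_mono_of_nonneg ((ae_restrict_iff' measurableSet_Ioi).2 (.of_forall (hf0 i))) hg
    ((ae_restrict_iff' measurableSet_Ioi).2 (.of_forall fun r hr => ?_))).trans (le_max_left _ _)
  by_cases hrR : r ∈ Ioc t R
  · simpa [g, piecewise_eq_of_mem _ _ _ hrR] using hC i r hrR
  · simpa [g, piecewise_eq_of_notMem _ _ _ hrR] using hK i r (lt_of_not_ge fun h => hrR ⟨hr, h⟩)

theorem exists_pos_forall_setIntegral_halfPlanePoissonKernel_cpow_le {ζ : ℂ} (hζ : 0 < ζ.im) {γ : ℝ}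
    (hγ : γ * arg ζ = Real.pi) {t : ℝ} (ht : 0 < t) (M : ℝ) :
    ∃ c > 0, ∀ x : ℝ, |x| ≤ M → ∫ r in Ioi t, halfPlanePoissonKernel ((ζ + r) ^ (γ : ℂ)) x ≤ c := by
  have hγ1 := one_lt_of_mul_arg_eq_pi hζ hγ
  have hV : ∀ r : ℝ, 0 < r → 0 < ((ζ + r) ^ (γ : ℂ)).im := fun r hr =>
    im_cpow_add_ofReal_pos hζ hγ hr
  set R := t + 2 * (|ζ.re| + (2 * |M|) ^ γ⁻¹)
  have hR : t + 2 * |ζ.re| ≤ R ∧ t + 2 * (2 * |M|) ^ γ⁻¹ ≤ R := by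
    constructor <;> linarith [abs_nonneg ζ.re, Real.rpow_nonneg (by positivity : 0 ≤ 2 * |M|) γ⁻¹]
  have htail : ∀ x : ℝ, |x| ≤ M → ∀ r ∈ Ioi R,
      halfPlanePoissonKernel ((ζ + r) ^ (γ : ℂ)) x ≤ 4 * 2 ^ γ * r ^ (-γ) := by
    intro x hx r (hr : R < r)
    refine halfPlanePoissonKernel_cpow_add_ofReal_le (by linarith) (by linarith) ?_
    calc 2 * |x| ≤ ((2 * |M|) ^ γ⁻¹) ^ γ := by
          rw [Real.rpow_inv_rpow (by positivity) (by linarith)]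
          linarith [le_abs_self M]
      _ ≤ (r / 2) ^ γ := by gcongr; linarith
  obtain ⟨r₀, hr₀, hmin⟩ := isCompact_Icc.exists_isMinOn
    (nonempty_Icc.2 (by linarith [abs_nonneg ζ.re] : t ≤ R))
    (continuous_im.comp (continuous_cpow_add_ofReal hζ.ne' γ)).continuousOn
  obtain ⟨c, hc, hbound⟩ := exists_pos_forall_setIntegral_Ioi_le (ι := {x : ℝ // |x| ≤ M})
    (f := fun x r => halfPlanePoissonKernel ((ζ + r) ^ (γ : ℂ)) x)
    (ht.trans_le (by linarith [abs_nonneg ζ.re])) hγ1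
    (fun x r hr => halfPlanePoissonKernel_nonneg (hV r (ht.trans hr)).le x)
    (fun x r hr => (halfPlanePoissonKernel_le_inv_im (hV r (ht.trans hr.1)) x).trans
      (inv_anti₀ (hV r₀ (ht.trans_le hr₀.1)) (hmin ⟨hr.1.le, hr.2⟩)))
    (fun x => htail x.1 x.2)
  exact ⟨c, hc, fun x hx => hbound ⟨x, hx⟩⟩

lemma exists_bound_mul_abs_rpow_of_bound {I : ℝ → ℝ} {M c e : ℝ} (hc : 0 < c) (he : e ≤ 0)
    (hI : ∀ x, |x| ≤ M → I x ≤ c) :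
    ∃ c' : ℝ, 0 < c' ∧ (∀ x, |x| ≤ M → I x ≤ c') ∧
      ∀ x, 0 < |x| → |x| ≤ M → I x ≤ c' * |x| ^ e := by
  refine ⟨c * max 1 (M ^ (-e)), by positivity, fun x hx => (hI x hx).trans ?_,
    fun x hx0 hx => (hI x hx).trans ?_⟩
  · exact le_mul_of_one_le_right hc.le (le_max_left _ _)
  · have hM : 0 < M := hx0.trans_le hx
    calc c = c * (M ^ (-e) * M ^ e) := by
          rw [← Real.rpow_add hM, neg_add_cancel, Real.rpow_zero, mul_one]
      _ ≤ c * (max 1 (M ^ (-e)) * |x| ^ e) := by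
          refine mul_le_mul_of_nonneg_left (mul_le_mul (le_max_right _ _)
            (Real.rpow_le_rpow_of_nonpos hx0 hx he) (Real.rpow_nonneg hM.le _) (by positivity))
            hc.le
      _ = _ := by ring

theorem stmt_5_general (a b : ℝ) (hb : 0 < b)
    (ζs : ℂ) (hζs : ζs = -(a : ℂ) / (b : ℂ) + Complex.I)
    (γ : ℝ) (hγ : γ = Real.pi / Complex.arg ζs)
    (ρ : ℝ)
    (U' V' : ℝ → ℝ)
    (hU : ∀ r : ℝ, U' r = ((ζs + (r : ℂ)) ^ (γ : ℂ)).re)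
    (hV : ∀ r : ℝ, V' r = ((ζs + (r : ℂ)) ^ (γ : ℂ)).im) :
    ∃ c : ℝ, 0 < c ∧
      (∀ x' : ℝ, |x'| ≤ 2 * ρ →
        (∫ r in Set.Ioi (1 / b), V' r / (V' r ^ 2 + (U' r - x') ^ 2)) ≤ c) ∧
      (∀ x' : ℝ, 0 < |x'| → |x'| ≤ 2 * ρ →
        (∫ r in Set.Ioi (1 / b), V' r / (V' r ^ 2 + (U' r - x') ^ 2))
          ≤ c * |x'| ^ (-1 + 1 / γ)) := by
  have hζ : 0 < ζs.im := by simp [hζs]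
  have hγθ : γ * arg ζs = Real.pi := by rw [hγ, div_mul_cancel₀ _ (arg_pos_of_im_pos hζ).ne']
  have he : -1 + 1 / γ ≤ 0 := by
    have := one_lt_of_mul_arg_eq_pi hζ hγθ
    rw [neg_add_nonpos_iff, div_le_one (by linarith)]
    linarith
  obtain ⟨c, hc, hbound⟩ :=
    exists_pos_forall_setIntegral_halfPlanePoissonKernel_cpow_le hζ hγθ (one_div_pos.2 hb) (2 * ρ)
  simp only [hU, hV]
  exact exists_bound_mul_abs_rpow_of_bound hc he hbound

/-- There is `c > 0` such that for every real `x'` with `|x'| ≤ 2ρ`,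
`∫_{1/b}^∞ V'(r) / (V'(r)² + (U'(r) - x')²) dr ≤ c`; in particular this
integral is bounded by a constant times `|x'|^{-1+1/γ}` for `0 < |x'| ≤ 2ρ`. -/
theorem stmt_5 (a b : ℝ) (hb : 0 < b)
    (ζs : ℂ) (hζs : ζs = -(a : ℂ) / (b : ℂ) + Complex.I)
    (γ : ℝ) (hγ : γ = Real.pi / Complex.arg ζs)
    (ρ : ℝ) (hρ : ρ = ‖ζs‖ ^ γ)
    (U' V' : ℝ → ℝ)
    (hU : ∀ r : ℝ, U' r = ((ζs + (r : ℂ)) ^ (γ : ℂ)).re)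
    (hV : ∀ r : ℝ, V' r = ((ζs + (r : ℂ)) ^ (γ : ℂ)).im) :
    ∃ c : ℝ, 0 < c ∧
      (∀ x' : ℝ, |x'| ≤ 2 * ρ →
        (∫ r in Set.Ioi (1 / b), V' r / (V' r ^ 2 + (U' r - x') ^ 2)) ≤ c) ∧
      (∀ x' : ℝ, 0 < |x'| → |x'| ≤ 2 * ρ →
        (∫ r in Set.Ioi (1 / b), V' r / (V' r ^ 2 + (U' r - x') ^ 2))
          ≤ c * |x'| ^ (-1 + 1 / γ)) :=
  stmt_5_general a b hb ζs hζs γ hγ ρ U' V' hU hV
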